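/- arXiv:2408.04059 — 7 statements merged into one kernel-verified Lean document; each statement's English description precedes it below -/
import Mathlib

section
/- The map ι from Aut(G) to Aut(F_k(G)), sending f to the automorphism A ↦ f(A) = {f(a) : a ∈ A}, is an injective group homomorphism, provided G has at least one edge and 1 ≤ k ≤ n−1. -/
open scoped Classical symmDiff

variable {V : Type*}

/-- The `k`-token graph of `G`: vertices are the `k`-subsets of `V(G)`,
two being adjacent iff their symmetric difference is an edge of `G`. -/
def tokenGraph [DecidableEq V] (G : SimpleGraph V) (k : ℕ) :
    SimpleGraph {A : Finset V // A.card = k} where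
  Adj A B := ∃ a b : V, G.Adj a b ∧ (A.1 ∆ B.1) = {a, b}
  symm := by
    constructor
    rintro A B ⟨a, b, hab, h⟩
    exact ⟨a, b, hab, by rwa [symmDiff_comm]⟩
  loopless := by
    constructor
    rintro A ⟨a, b, hab, h⟩
    rw [symmDiff_self] at h
    exact (Finset.insert_ne_empty a {b}) h.symm

/-- `S` is a 2-cut with the same neighbours: a 2-element vertex set whose removal
disconnects `G` and whose two vertices have the same neighbours outside `S`. -/
def SameNbrCut (G : SimpleGraph V) (S : Finset V) : Prop :=
  S.card = 2 ∧ ¬ (G.induce ((↑S : Set V)ᶜ)).Preconnected ∧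
    ∀ x ∈ S, ∀ y ∈ S, ∀ v ∉ S, (G.Adj x v ↔ G.Adj y v)

/-- `A^S = (A \ S) ∪ (S \ A)`. -/
def tokenMove [DecidableEq V] (A S : Finset V) : Finset V := (A \ S) ∪ (S \ A)

/-- The connected components of `G \ S`. -/
abbrev delComp (G : SimpleGraph V) (S : Finset V) :=
  (G.induce ((↑S : Set V)ᶜ)).ConnectedComponent

/-- The distribution tuple of `A` over the components of `G \ S`. -/
noncomputable def compDist (G : SimpleGraph V) (S : Finset V) (A : Finset V)
    (c : delComp G S) : ℕ :=
  {v : ((↑S : Set V)ᶜ : Set V) | (v : V) ∈ A ∧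
    (G.induce ((↑S : Set V)ᶜ)).connectedComponentMk v = c}.ncard

/-- `T_S`: distribution tuples with `kᵢ ≤ nᵢ` summing to `k - 1`. -/
def TS (G : SimpleGraph V) (S : Finset V) (k : ℕ) : Set (delComp G S → ℕ) :=
  {t | (∀ c, t c ≤ c.supp.ncard) ∧ ∑ᶠ c, t c = k - 1}

/-- The map `φ_{S,α}` on `k`-subsets. -/
noncomputable def phiFun [DecidableEq V] (G : SimpleGraph V) (S : Finset V)
    (α : Set (delComp G S → ℕ)) (A : Finset V) : Finset V :=
  if compDist G S A ∈ α then tokenMove A S else A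

/-- The map `ψ_β`, the composition of the `φ_{Sᵢ,βᵢ}`. -/
noncomputable def psiFun [DecidableEq V] (G : SimpleGraph V) {q : ℕ}
    (S : Fin q → Finset V) (β : ∀ i, Set (delComp G (S i) → ℕ)) :
    Finset V → Finset V :=
  (List.ofFn (fun i => phiFun G (S i) (β i))).foldr (· ∘ ·) id

section TokenGraphIso

variable {W : Type*} [DecidableEq V] [DecidableEq W] {G : SimpleGraph V} {G' : SimpleGraph W}

theorem tokenGraph_adj_image_of_adj (f : G ≃g G') {k : ℕ} {A B : {A : Finset V // A.card = k}}
    (h : (tokenGraph G k).Adj A B) : ∃ a b, G'.Adj a b ∧ A.1.image f ∆ B.1.image f = {a, b} := by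
  obtain ⟨a, b, hab, hAB⟩ := h
  refine ⟨f a, f b, f.map_adj_iff.mpr hab, ?_⟩
  rw [← Finset.image_symmDiff _ _ f.injective, hAB, Finset.image_insert, Finset.image_singleton]

noncomputable def tokenGraphIso (f : G ≃g G') (k : ℕ) : tokenGraph G k ≃g tokenGraph G' k where
  toFun A := ⟨A.1.image f, (Finset.card_image_of_injective _ f.injective).trans A.2⟩
  invFun A := ⟨A.1.image f.symm, (Finset.card_image_of_injective _ f.symm.injective).trans A.2⟩
  left_inv A := Subtype.ext <| by simp [Finset.image_image, Function.comp_def]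
  right_inv A := Subtype.ext <| by simp [Finset.image_image, Function.comp_def]
  map_rel_iff' {A B} := by
    refine ⟨fun h => ?_, tokenGraph_adj_image_of_adj f⟩
    show ∃ a b, G.Adj a b ∧ A.1 ∆ B.1 = {a, b}
    simpa [Finset.image_image, Function.comp_def] using tokenGraph_adj_image_of_adj f.symm h

theorem tokenGraphIso_trans {U : Type*} [DecidableEq U] {G'' : SimpleGraph U}
    (f : G ≃g G') (g : G' ≃g G'') (k : ℕ) :
    tokenGraphIso (f.trans g) k = (tokenGraphIso f k).trans (tokenGraphIso g k) :=
  RelIso.ext fun A => Subtype.ext <| by simp [tokenGraphIso, Finset.image_image, Function.comp_def]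

end TokenGraphIso

theorem Finset.exists_card_eq_mem_notMem [Fintype V] {v w : V} (hvw : v ≠ w) {k : ℕ}
    (hk1 : 1 ≤ k) (hk2 : k ≤ Fintype.card V - 1) : ∃ A : Finset V, A.card = k ∧ v ∈ A ∧ w ∉ A := by
  obtain ⟨A, hvA, hAw, hA⟩ := Finset.exists_subsuperset_card_eq
    (Finset.singleton_subset_iff.mpr (Finset.mem_erase.mpr ⟨hvw, Finset.mem_univ v⟩))
    (by simpa using hk1) (by rwa [Finset.card_erase_of_mem (Finset.mem_univ w), Finset.card_univ])
  exact ⟨A, hA, Finset.singleton_subset_iff.mp hvA, fun hw => by simpa using hAw hw⟩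

theorem Equiv.eq_of_image_eq_of_card_eq {W : Type*} [Fintype V] [DecidableEq W] {f g : V ≃ W}
    {k : ℕ} (hk1 : 1 ≤ k) (hk2 : k ≤ Fintype.card V - 1)
    (h : ∀ A : Finset V, A.card = k → A.image f = A.image g) : f = g := by
  ext v
  by_contra hne
  have hvw : v ≠ g.symm (f v) := fun hv =>
    hne ((g.apply_symm_apply (f v)).symm.trans (congrArg g hv.symm))
  obtain ⟨A, hA, hvA, hwA⟩ := Finset.exists_card_eq_mem_notMem hvw hk1 hk2
  have hfv : f v ∈ A.image g := h A hA ▸ Finset.mem_image_of_mem f hvA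
  obtain ⟨a, haA, hga⟩ := Finset.mem_image.mp hfv
  exact hwA (by rwa [← hga, Equiv.symm_apply_apply])

theorem iota_injective_hom_general [Fintype V] [DecidableEq V]
    (G : SimpleGraph V) (k : ℕ)
    (hk1 : 1 ≤ k) (hk2 : k ≤ Fintype.card V - 1) :
    ∃ ι : (G ≃g G) → (tokenGraph G k ≃g tokenGraph G k),
      (∀ (f : G ≃g G) (A : {A : Finset V // A.card = k}),
          ((ι f A : {B : Finset V // B.card = k}) : Finset V) = Finset.image f (↑A : Finset V)) ∧
      (∀ f g : G ≃g G, ι (f.trans g) = (ι f).trans (ι g)) ∧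
      Function.Injective ι := by
  refine ⟨(tokenGraphIso · k), fun _ _ => rfl, fun f g => tokenGraphIso_trans f g k, ?_⟩
  intro f g hfg
  have himage (A : Finset V) (hA : A.card = k) : A.image f = A.image g :=
    congrArg (fun e : tokenGraph G k ≃g tokenGraph G k => (e ⟨A, hA⟩).1) hfg
  exact RelIso.toEquiv_injective (Equiv.eq_of_image_eq_of_card_eq hk1 hk2 himage)

/-- `ι` is an injective group homomorphism `Aut(G) → Aut(F_k(G))`. -/
theorem iota_injective_hom [Fintype V] [DecidableEq V]
    (G : SimpleGraph V) (k : ℕ) (hedge : ∃ a b : V, G.Adj a b)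
    (hk1 : 1 ≤ k) (hk2 : k ≤ Fintype.card V - 1) :
    ∃ ι : (G ≃g G) → (tokenGraph G k ≃g tokenGraph G k),
      (∀ (f : G ≃g G) (A : {A : Finset V // A.card = k}),
          ((ι f A : {B : Finset V // B.card = k}) : Finset V) = Finset.image f (↑A : Finset V)) ∧
      (∀ f g : G ≃g G, ι (f.trans g) = (ι f).trans (ι g)) ∧
      Function.Injective ι :=
  iota_injective_hom_general G k hk1 hk2
end

section
/- Let G be a connected graph and let S = {x,y} and S' = {w,z} be two distinct 2-cuts with the same neighbours of G. Then S and S' are disjoint. -/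
open scoped Classical symmDiff

variable {V : Type*}

/-!
If two distinct same-neighbour 2-cuts met, say `S ∋ y` and `S' = {y, w}` with `w ∉ S`, then every
vertex `a` of `G \ S` next to `S` would be adjacent to `y` (as the vertices of `S` share their
neighbours), hence equal or adjacent to `w` (as `y` and `w` share theirs). Any vertex of `G \ S`
then reaches `w` inside `G \ S` by following a walk of `G` to `w` up to its first exit from `G \ S`,
so `S` would not be a cut.
-/

namespace SimpleGraph

variable {G : SimpleGraph V} {s : Set V} {w : V}

lemma Walk.reachable_induce_of_boundary (hw : w ∈ s)
    (hbdry : ∀ a (ha : a ∈ s) b, b ∉ s → G.Adj a b →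
      (G.induce s).Reachable ⟨a, ha⟩ ⟨w, hw⟩) {u : V} (p : G.Walk u w) (hu : u ∈ s) :
    (G.induce s).Reachable ⟨u, hu⟩ ⟨w, hw⟩ := by
  induction p with
  | nil => rfl
  | @cons a b _ hab q ih =>
    by_cases hb : b ∈ s
    · exact (show (G.induce s).Adj ⟨a, hu⟩ ⟨b, hb⟩ from hab).reachable.trans (ih hw hbdry hb)
    · exact hbdry a hu b hb hab

lemma Preconnected.induce_of_boundary (hG : G.Preconnected) (hw : w ∈ s)
    (hbdry : ∀ a (ha : a ∈ s) b, b ∉ s → G.Adj a b →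
      (G.induce s).Reachable ⟨a, ha⟩ ⟨w, hw⟩) :
    (G.induce s).Preconnected := by
  rintro ⟨u, hu⟩ ⟨v, hv⟩
  obtain ⟨p⟩ := hG u w
  obtain ⟨q⟩ := hG v w
  exact (p.reachable_induce_of_boundary hw hbdry hu).trans
    (q.reachable_induce_of_boundary hw hbdry hv).symm

lemma Preconnected.induce_compl_of_sameNbrs (hG : G.Preconnected) {S : Finset V} {y : V}
    (hS : ∀ x ∈ S, ∀ x' ∈ S, ∀ v ∉ S, (G.Adj x v ↔ G.Adj x' v))
    (hyw : ∀ x ∈ ({y, w} : Finset V), ∀ x' ∈ ({y, w} : Finset V), ∀ v ∉ ({y, w} : Finset V),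
      (G.Adj x v ↔ G.Adj x' v))
    (hyS : y ∈ S) (hwS : w ∉ S) : (G.induce (↑S : Set V)ᶜ).Preconnected := by
  refine hG.induce_of_boundary (by simpa using hwS) fun a ha b hb hab => ?_
  have haS : a ∉ S := by simpa using ha
  have hya : G.Adj y a := (hS b (by simpa using hb) y hyS a haS).mp hab.symm
  by_cases haw : a = w
  · subst haw
    rfl
  · have ha_yw : a ∉ ({y, w} : Finset V) := by grind
    have hwa : G.Adj w a := (hyw y (by simp) w (by simp) a ha_yw).mp hya
    exact Adj.reachable (G := G.induce (↑S : Set V)ᶜ) hwa.symm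

end SimpleGraph

/-- Lemma 1(a): two distinct 2-cuts with the same neighbours are disjoint. -/
theorem sameNbrCuts_disjoint (G : SimpleGraph V) (hG : G.Connected)
    (S S' : Finset V) (hS : SameNbrCut G S) (hS' : SameNbrCut G S')
    (hne : S ≠ S') : Disjoint S S' := by
  by_contra hmeet
  obtain ⟨y, hyS, hyS'⟩ := Finset.not_disjoint_iff.mp hmeet
  obtain ⟨w, hwS', hwS⟩ : ∃ w ∈ S', w ∉ S := Finset.not_subset.mp fun hsub =>
    hne (Finset.eq_of_subset_of_card_le hsub (by rw [hS.1, hS'.1])).symm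
  have hyw : y ≠ w := by rintro rfl; exact hwS hyS
  obtain rfl : S' = {y, w} := (Finset.eq_of_subset_of_card_le
    (by simp [Finset.insert_subset_iff, hyS', hwS']) (by rw [hS'.1, Finset.card_pair hyw])).symm
  exact hS.2.1 (hG.preconnected.induce_compl_of_sameNbrs hS.2.2 hS'.2.2 hyS hwS)
end

section
/- Let G be a connected graph that is not a 4-cycle, and let S = {x,y} and S' = {w,z} be two distinct 2-cuts with the same neighbours of G. Then w and z lie in the same connected component of G \ S. -/
open scoped Classical symmDiff

variable {V : Type*}

/-
Two distinct such cuts are disjoint: if they shared a vertex, the other vertex of the second cut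
would be adjacent to the common neighbour of `S` that every component of `G \ S` contains, making
`G \ S` connected. Now if `w` and `z` lie in different components of `G \ {x, y}`, then, having
the same neighbours outside `{w, z}`, all their neighbours lie in `{x, y}`. Every component of
`G \ {w, z}` contains a common neighbour of `w` and `z`, so `x` and `y` are such neighbours in
different components of `G \ {w, z}`, and symmetrically all neighbours of `x` and `y` lie in
`{w, z}`. Connectivity then forces `G` to be the 4-cycle `x w y z`.
-/

open SimpleGraph

def SameNbrs (G : SimpleGraph V) (S : Finset V) : Prop :=
  ∀ x ∈ S, ∀ y ∈ S, ∀ v ∉ S, (G.Adj x v ↔ G.Adj y v)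

section
variable {G : SimpleGraph V}

lemma SimpleGraph.Connected.mem_of_forall_adj_mem (hG : G.Connected) {K : Set V}
    (hK : ∀ a ∈ K, ∀ b, G.Adj a b → b ∈ K) {a : V} (ha : a ∈ K) (u : V) : u ∈ K := by
  by_contra hu
  obtain ⟨d, -, hd₁, hd₂⟩ := (hG.preconnected a u).some.exists_boundary_dart K ha hu
  exact hd₂ (hK _ hd₁ _ d.adj)

lemma SimpleGraph.Walk.exists_induce_compl_reachable_adj_mem {S : Set V} {u t : V}
    (p : G.Walk u t) (hu : u ∉ S) (ht : t ∈ S) :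
    ∃ (v : V) (hv : v ∉ S), (∃ s ∈ S, G.Adj v s) ∧
      (G.induce Sᶜ).Reachable ⟨u, hu⟩ ⟨v, hv⟩ := by
  induction p with
  | nil => exact absurd ht hu
  | @cons u w t huw _ ih =>
    by_cases hw : w ∈ S
    · exact ⟨u, hu, ⟨w, hw, huw⟩, .rfl⟩
    · obtain ⟨v, hv, hvS, hwv⟩ := ih hw ht
      exact ⟨v, hv, hvS, (show (G.induce Sᶜ).Adj ⟨u, hu⟩ ⟨w, hw⟩ from huw).reachable.trans hwv⟩

lemma nonempty_iso_cycleGraph_four {a b c d : V} (hab : G.Adj a b) (hbc : G.Adj b c)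
    (hcd : G.Adj c d) (hda : G.Adj d a) (hac : a ≠ c) (hbd : b ≠ d)
    (hnac : ¬ G.Adj a c) (hnbd : ¬ G.Adj b d)
    (hcover : ∀ v, v = a ∨ v = b ∨ v = c ∨ v = d) : Nonempty (G ≃g cycleGraph 4) := by
  have hinj : Function.Injective ![a, b, c, d] := by
    intro i j h
    fin_cases i <;> fin_cases j <;>
      simp_all [hab.ne, hbc.ne, hcd.ne, hda.ne, hab.ne.symm, hbc.ne.symm, hcd.ne.symm, hda.ne.symm,
        hac.symm, hbd.symm]
  have hsurj : Function.Surjective ![a, b, c, d] := by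
    intro v
    rcases hcover v with rfl | rfl | rfl | rfl
    exacts [⟨0, rfl⟩, ⟨1, rfl⟩, ⟨2, rfl⟩, ⟨3, rfl⟩]
  refine ⟨RelIso.symm ⟨Equiv.ofBijective _ ⟨hinj, hsurj⟩, fun {i j} => ?_⟩⟩
  have hnca : ¬ G.Adj c a := fun h => hnac h.symm
  have hndb : ¬ G.Adj d b := fun h => hnbd h.symm
  change G.Adj (![a, b, c, d] i) (![a, b, c, d] j) ↔ _
  rw [cycleGraph_adj]
  fin_cases i <;> fin_cases j <;>
    simp +decide [hab, hbc, hcd, hda, hab.symm, hbc.symm, hcd.symm, hda.symm,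
      hnac, hnbd, hnca, hndb]

lemma SameNbrCut.sameNbrs {S : Finset V} (h : SameNbrCut G S) : SameNbrs G S := h.2.2

lemma SameNbrCut.ne [DecidableEq V] {x y : V} (h : SameNbrCut G {x, y}) : x ≠ y := by
  rintro rfl
  simpa using h.1

lemma SameNbrs.adj_of_adj [DecidableEq V] {a b v : V} (h : SameNbrs G {a, b})
    (hv : v ∉ ({a, b} : Finset V)) (ha : G.Adj a v) : G.Adj b v :=
  (h a (by simp) b (by simp) v hv).mp ha

lemma SameNbrs.exists_reachable_adj_forall (hG : G.Connected) {S : Finset V}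
    (h : SameNbrs G S) (hS : S.Nonempty) {u : V} (hu : u ∈ (↑S : Set V)ᶜ) :
    ∃ (v : V) (hv : v ∈ (↑S : Set V)ᶜ), (∀ s ∈ S, G.Adj s v) ∧
      (G.induce (↑S : Set V)ᶜ).Reachable ⟨u, hu⟩ ⟨v, hv⟩ := by
  obtain ⟨t, ht⟩ := hS
  obtain ⟨v, hv, ⟨s, hs, hvs⟩, huv⟩ :=
    (hG.preconnected u t).some.exists_induce_compl_reachable_adj_mem hu (Finset.mem_coe.2 ht)
  exact ⟨v, hv, fun s' hs' => (h s hs s' hs' v hv).mp hvs.symm, huv⟩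

lemma SameNbrs.reachable_of_adj [DecidableEq V] {S : Finset V} {w z v : V}
    (h : SameNbrs G {w, z}) (hw : w ∈ (↑S : Set V)ᶜ) (hz : z ∈ (↑S : Set V)ᶜ)
    (hv : v ∈ (↑S : Set V)ᶜ) (hwv : G.Adj w v) :
    (G.induce (↑S : Set V)ᶜ).Reachable ⟨w, hw⟩ ⟨z, hz⟩ := by
  have hwv' : (G.induce (↑S : Set V)ᶜ).Adj ⟨w, hw⟩ ⟨v, hv⟩ := hwv
  by_cases hvz : v = z
  · subst hvz
    exact hwv'.reachable
  · have hzv : (G.induce (↑S : Set V)ᶜ).Adj ⟨z, hz⟩ ⟨v, hv⟩ :=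
      h.adj_of_adj (by simp [hwv.ne', hvz]) hwv
    exact hwv'.reachable.trans hzv.reachable.symm

lemma SameNbrs.mem_of_adj_of_not_reachable [DecidableEq V] {S : Finset V} {w z v : V}
    (h : SameNbrs G {w, z}) (hw : w ∈ (↑S : Set V)ᶜ) (hz : z ∈ (↑S : Set V)ᶜ)
    (hwz : ¬ (G.induce (↑S : Set V)ᶜ).Reachable ⟨w, hw⟩ ⟨z, hz⟩) (hwv : G.Adj w v) : v ∈ S := by
  by_contra hv
  exact hwz (h.reachable_of_adj hw hz hv hwv)

lemma SameNbrCut.mem_of_sameNbrs [DecidableEq V] (hG : G.Connected) {x y z : V}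
    (hS : SameNbrCut G {x, y}) (hS' : SameNbrs G {x, z}) : z ∈ ({x, y} : Finset V) := by
  by_contra hz
  have hzc : z ∈ (↑({x, y} : Finset V) : Set V)ᶜ := hz
  refine hS.2.1 fun a b => ?_
  suffices hreach : ∀ c, (G.induce (↑({x, y} : Finset V) : Set V)ᶜ).Reachable c ⟨z, hzc⟩ from
    (hreach a).trans (hreach b).symm
  intro c
  obtain ⟨v, hv, hSv, hcv⟩ := hS.sameNbrs.exists_reachable_adj_forall hG (by simp) c.2
  refine hcv.trans ?_
  by_cases hvz : v = z
  · subst hvz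
    rfl
  · have hvx : v ≠ x := by
      rintro rfl
      simp at hv
    have hvz_adj : (G.induce (↑({x, y} : Finset V) : Set V)ᶜ).Adj ⟨v, hv⟩ ⟨z, hzc⟩ :=
      (hS'.adj_of_adj (by simp [hvx, hvz]) (hSv x (by simp))).symm
    exact hvz_adj.reachable

lemma SameNbrCut.eq_of_common [DecidableEq V] (hG : G.Connected) {c a b : V}
    (ha : SameNbrCut G {c, a}) (hb : SameNbrCut G {c, b}) : a = b := by
  rcases Finset.mem_insert.1 (ha.mem_of_sameNbrs hG hb.sameNbrs) with h | h
  · exact absurd h.symm hb.ne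
  · exact (Finset.mem_singleton.1 h).symm

lemma SameNbrCut.disjoint [DecidableEq V] (hG : G.Connected) {x y w z : V}
    (hS : SameNbrCut G {x, y}) (hS' : SameNbrCut G {w, z})
    (hne : ({x, y} : Finset V) ≠ {w, z}) : Disjoint ({x, y} : Finset V) {w, z} := by
  have hS₂ : SameNbrCut G {y, x} := by rwa [Finset.pair_comm]
  have hS'₂ : SameNbrCut G {z, w} := by rwa [Finset.pair_comm]
  refine Finset.disjoint_left.2 fun c hc hc' => hne ?_
  simp only [Finset.mem_insert, Finset.mem_singleton] at hc hc'
  rcases hc with rfl | rfl <;> rcases hc' with rfl | rfl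
  · rw [hS.eq_of_common hG hS']
  · rw [hS.eq_of_common hG hS'₂, Finset.pair_comm]
  · rw [hS₂.eq_of_common hG hS', Finset.pair_comm]
  · rw [hS₂.eq_of_common hG hS'₂]

/-- Each component of `G \ S` contains a common neighbour of `S`. -/
lemma SameNbrCut.adj_and_adj_and_not_reachable (hG : G.Connected) {S : Finset V}
    (hS : SameNbrCut G S) {w x y : V} (hw : w ∈ S) (hx : x ∈ (↑S : Set V)ᶜ) (hy : y ∈ (↑S : Set V)ᶜ)
    (hN : ∀ v, G.Adj w v → v = x ∨ v = y) :
    G.Adj w x ∧ G.Adj w y ∧ ¬ (G.induce (↑S : Set V)ᶜ).Reachable ⟨x, hx⟩ ⟨y, hy⟩ := by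
  obtain ⟨a, b, hab⟩ : ∃ a b, ¬ (G.induce (↑S : Set V)ᶜ).Reachable a b := by
    simpa [SimpleGraph.Preconnected] using hS.2.1
  obtain ⟨va, hva, hSva, hra⟩ := hS.sameNbrs.exists_reachable_adj_forall hG ⟨w, hw⟩ a.2
  obtain ⟨vb, hvb, hSvb, hrb⟩ := hS.sameNbrs.exists_reachable_adj_forall hG ⟨w, hw⟩ b.2
  rcases hN va (hSva w hw) with rfl | rfl <;> rcases hN vb (hSvb w hw) with rfl | rfl
  · exact absurd (hra.trans hrb.symm) hab
  · exact ⟨hSva w hw, hSvb w hw, fun h => hab (hra.trans (h.trans hrb.symm))⟩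
  · exact ⟨hSvb w hw, hSva w hw, fun h => hab (hra.trans (h.symm.trans hrb.symm))⟩
  · exact absurd (hra.trans hrb.symm) hab

lemma SameNbrCut.nonempty_iso_cycleGraph_four_of_not_reachable [DecidableEq V]
    (hG : G.Connected) {x y w z : V} (hS : SameNbrCut G {x, y}) (hS' : SameNbrCut G {w, z})
    (hx : x ∈ (↑({w, z} : Finset V) : Set V)ᶜ) (hy : y ∈ (↑({w, z} : Finset V) : Set V)ᶜ)
    (hw : w ∈ (↑({x, y} : Finset V) : Set V)ᶜ) (hz : z ∈ (↑({x, y} : Finset V) : Set V)ᶜ)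
    (hwz : ¬ (G.induce (↑({x, y} : Finset V) : Set V)ᶜ).Reachable ⟨w, hw⟩ ⟨z, hz⟩) :
    Nonempty (G ≃g cycleGraph 4) := by
  have hNw : ∀ v, G.Adj w v → v = x ∨ v = y := fun v hv => by
    simpa using hS'.sameNbrs.mem_of_adj_of_not_reachable hw hz hwz hv
  obtain ⟨hwx, hwy, hxy⟩ := hS'.adj_and_adj_and_not_reachable hG (by simp) hx hy hNw
  have hnwz : ¬ G.Adj w z := fun h =>
    hwz (show (G.induce (↑({x, y} : Finset V) : Set V)ᶜ).Adj ⟨w, hw⟩ ⟨z, hz⟩ from h).reachable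
  have hnxy : ¬ G.Adj x y := fun h =>
    hxy (show (G.induce (↑({w, z} : Finset V) : Set V)ᶜ).Adj ⟨x, hx⟩ ⟨y, hy⟩ from h).reachable
  have hSyx : SameNbrs G {y, x} := by rw [Finset.pair_comm]; exact hS.sameNbrs
  have hSzw : SameNbrs G {z, w} := by rw [Finset.pair_comm]; exact hS'.sameNbrs
  have hNz : ∀ v, G.Adj z v → v = x ∨ v = y := fun v hv => by
    simpa using hSzw.mem_of_adj_of_not_reachable hz hw (fun h => hwz h.symm) hv
  have hNx : ∀ v, G.Adj x v → v = w ∨ v = z := fun v hv => by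
    simpa using hS.sameNbrs.mem_of_adj_of_not_reachable hx hy hxy hv
  have hNy : ∀ v, G.Adj y v → v = w ∨ v = z := fun v hv => by
    simpa using hSyx.mem_of_adj_of_not_reachable hy hx (fun h => hxy h.symm) hv
  have hcover : ∀ v, v ∈ ({x, w, y, z} : Set V) := by
    refine hG.mem_of_forall_adj_mem ?_ (Set.mem_insert x _)
    rintro a (rfl | rfl | rfl | rfl) b hab
    · rcases hNx b hab with rfl | rfl <;> simp
    · rcases hNw b hab with rfl | rfl <;> simp
    · rcases hNy b hab with rfl | rfl <;> simp
    · rcases hNz b hab with rfl | rfl <;> simp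
  exact nonempty_iso_cycleGraph_four hwx.symm hwy (hS'.sameNbrs.adj_of_adj hy hwy).symm
    (hS'.sameNbrs.adj_of_adj hx hwx) hS.ne hS'.ne hnxy hnwz (by simpa using hcover)

end

/-- Lemma 1(b): if `G` is not a 4-cycle, the two vertices of a second
2-cut with the same neighbours lie in the same component of `G \ S`. -/
theorem sameNbrCut_sameComponent [DecidableEq V] (G : SimpleGraph V)
    (hG : G.Connected) (h4 : IsEmpty (G ≃g SimpleGraph.cycleGraph 4))
    (x y w z : V) (hS : SameNbrCut G {x, y}) (hS' : SameNbrCut G {w, z})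
    (hne : ({x, y} : Finset V) ≠ {w, z}) :
    ∃ (hw : w ∈ ((↑({x, y} : Finset V) : Set V))ᶜ)
      (hz : z ∈ ((↑({x, y} : Finset V) : Set V))ᶜ),
      (G.induce ((↑({x, y} : Finset V) : Set V))ᶜ).Reachable ⟨w, hw⟩ ⟨z, hz⟩ := by
  have hdisj := Finset.disjoint_left.1 (hS.disjoint hG hS' hne)
  have hw : w ∈ (↑({x, y} : Finset V) : Set V)ᶜ := fun h => hdisj h (by simp)
  have hz : z ∈ (↑({x, y} : Finset V) : Set V)ᶜ := fun h => hdisj h (by simp)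
  refine ⟨hw, hz, ?_⟩
  by_contra hwz
  exact h4.false (hS.nonempty_iso_cycleGraph_four_of_not_reachable hG hS'
    (hdisj (by simp)) (hdisj (by simp)) hw hz hwz).some
end

section
/- Let G be a connected graph, S = {x,y} a 2-cut with the same neighbours, G_1,…,G_c the connected components of G\S, and T_S the set of tuples (k_1,…,k_c) of nonnegative integers with k_i ≤ |V(G_i)| and Σk_i = k−1. For any α ⊆ T_S, the map φ_{S,α} which sends A to A^S if the component-distribution tuple of A\S lies in α (and |A ∩ S| = 1), and fixes A otherwise, is an automorphism of F_k(G). -/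
/-!
Write `φ(A) = A ∆ S` or `A`, according to whether the distribution of `A` over the components
of `G \ S` lies in `α`. The distribution ignores `S`, so `φ` is an involution, and a distribution
in `T_S` sums to `k - 1`, so `|A ∩ S| = 1` and `A ∆ S` is again a `k`-set.
For an edge `A ∆ B = {a, b}` of `F_k(G)`, either `φ` treats `A` and `B` alike and
`φ A ∆ φ B = A ∆ B`, or their distributions differ and `φ A ∆ φ B = {a, b} ∆ S`.
In the latter case `ab` lies neither inside `S` (then `B = A ∆ S` has the distribution of `A`)
nor inside `G \ S` (a token moving along an edge of `G \ S` stays in its component), so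
`a ∈ S`, `b ∉ S`, and `{a, b} ∆ S = {x, b}` with `S = {a, x}`, an edge since `a` and `x` have
the same neighbours.
-/

open scoped Classical symmDiff

variable {V : Type*}

open Finset

section

variable [DecidableEq V] (G : SimpleGraph V) (S : Finset V)

noncomputable def delCompOf (v : V) : Option (delComp G S) :=
  if h : v ∈ S then none
  else some ((G.induce ((↑S : Set V)ᶜ)).connectedComponentMk ⟨v, h⟩)

lemma delCompOf_eq_none_iff {v : V} : delCompOf G S v = none ↔ v ∈ S := by
  unfold delCompOf; split_ifs with h <;> simp [h]

lemma delCompOf_eq_of_adj {a b : V} (hab : G.Adj a b) (ha : a ∉ S) (hb : b ∉ S) :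
    delCompOf G S a = delCompOf G S b := by
  have hadj : (G.induce ((↑S : Set V)ᶜ)).Adj ⟨a, ha⟩ ⟨b, hb⟩ := hab
  rw [delCompOf, delCompOf, dif_neg ha, dif_neg hb]
  exact congrArg some (SimpleGraph.ConnectedComponent.sound hadj.reachable)

lemma compDist_eq_card_filter (A : Finset V) (c : delComp G S) :
    compDist G S A c = #{v ∈ A | delCompOf G S v = some c} := by
  rw [compDist, ← Set.ncard_image_of_injective _ Subtype.val_injective, ← Set.ncard_coe_finset]
  congr 1
  ext v
  by_cases hv : v ∈ S <;> simp [delCompOf, hv]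

lemma card_inter_add_finsum_compDist [Fintype V] (A : Finset V) :
    #(A ∩ S) + ∑ᶠ c, compDist G S A c = #A := by
  rw [finsum_eq_sum_of_fintype, ← filter_mem_eq_inter]
  conv_rhs => rw [card_eq_sum_card_fiberwise (f := delCompOf G S) (t := univ)
    (fun _ _ => mem_univ _), Fintype.sum_option]
  simp only [compDist_eq_card_filter, delCompOf_eq_none_iff]

lemma compDist_symmDiff_of_subset {D : Finset V} (hD : D ⊆ S) (A : Finset V) :
    compDist G S (A ∆ D) = compDist G S A := by
  funext c
  simp only [compDist_eq_card_filter]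
  congr 1
  ext v
  by_cases hv : v ∈ S
  · simp [(delCompOf_eq_none_iff G S).2 hv]
  · have hvD : v ∉ D := fun h => hv (hD h)
    simp [mem_symmDiff, hvD]

lemma sum_insert_erase_of_eq {M : Type*} [AddCommMonoid M] {f : V → M} {A : Finset V}
    {a b : V} (ha : a ∈ A) (hb : b ∉ A) (hf : f a = f b) :
    ∑ v ∈ insert b (A.erase a), f v = ∑ v ∈ A, f v := by
  rw [sum_insert (fun h => hb (mem_of_mem_erase h)), ← hf, add_sum_erase A f ha]

lemma compDist_eq_of_symmDiff_eq_pair {A B : Finset V} {a b : V} (hcard : #A = #B)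
    (h : A ∆ B = {a, b}) (hab : delCompOf G S a = delCompOf G S b) :
    compDist G S A = compDist G S B := by
  have hmem : ∀ v, v ∈ A ∆ B ↔ v = a ∨ v = b := by simp [h]
  wlog ha : a ∈ A generalizing A B
  · have haB : a ∈ B := by have := hmem a; simp only [mem_symmDiff] at this; tauto
    exact (this hcard.symm (by rwa [symmDiff_comm]) (by simpa [symmDiff_comm] using hmem) haB).symm
  have haB : a ∉ B := by have := hmem a; simp only [mem_symmDiff] at this; tauto
  have hbA : b ∉ A := by
    intro hbA
    have hBA : B ⊂ A := by
      refine ssubset_of_subset_of_ne (fun v hvB => ?_) (fun hBA => haB (hBA ▸ ha))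
      by_contra hvA
      have := hmem v
      simp only [mem_symmDiff] at this
      rcases this.1 (Or.inr ⟨hvB, hvA⟩) with rfl | rfl <;> contradiction
    exact (card_lt_card hBA).ne' hcard
  have hB : B = insert b (A.erase a) := by
    ext v
    have := hmem v
    simp only [mem_symmDiff] at this
    simp only [mem_insert, mem_erase]
    grind
  funext c
  simp only [compDist_eq_card_filter, card_filter, hB]
  exact (sum_insert_erase_of_eq ha hbA (by rw [hab])).symm

variable {G S}

lemma exists_adj_pair_symmDiff_of_mem_of_notMem (hS : SameNbrCut G S) {a b : V}
    (hab : G.Adj a b) (ha : a ∈ S) (hb : b ∉ S) :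
    ∃ x y, G.Adj x y ∧ ({a, b} : Finset V) ∆ S = {x, y} := by
  obtain ⟨x, hx⟩ := card_eq_one.1 (by rw [card_erase_of_mem ha, hS.1] : #(S.erase a) = 1)
  have hxS : x ∈ S.erase a := hx ▸ mem_singleton_self x
  refine ⟨x, b, (hS.2.2 a ha x (mem_of_mem_erase hxS) b hb).1 hab, ?_⟩
  have hxa : x ≠ a := ne_of_mem_erase hxS
  have hba : b ≠ a := hab.ne.symm
  have hbx : b ≠ x := fun h => hb (h ▸ mem_of_mem_erase hxS)
  rw [← insert_erase ha, hx]
  ext v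
  simp only [mem_symmDiff, mem_insert, mem_singleton]
  grind

lemma exists_adj_symmDiff_symmDiff_of_compDist_ne (hS : SameNbrCut G S) {A B : Finset V}
    (hcard : #A = #B) (hne : compDist G S A ≠ compDist G S B) {a b : V} (hab : G.Adj a b)
    (h : A ∆ B = {a, b}) : ∃ x y, G.Adj x y ∧ A ∆ B ∆ S = {x, y} := by
  rw [h]
  by_cases ha : a ∈ S <;> by_cases hb : b ∈ S
  · refine absurd ?_ hne
    have hsub : ({a, b} : Finset V) ⊆ S := by simp [insert_subset_iff, ha, hb]
    rw [← symmDiff_symmDiff_cancel_left A B, h, compDist_symmDiff_of_subset G S hsub]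
  · exact exists_adj_pair_symmDiff_of_mem_of_notMem hS hab ha hb
  · rw [pair_comm]
    exact exists_adj_pair_symmDiff_of_mem_of_notMem hS hab.symm hb ha
  · exact absurd (compDist_eq_of_symmDiff_eq_pair G S hcard h
      (delCompOf_eq_of_adj G S hab ha hb)) hne

variable {α : Set (delComp G S → ℕ)}

lemma phiFun_eq_symmDiff (A : Finset V) :
    phiFun G S α A = A ∆ (if compDist G S A ∈ α then S else ∅) := by
  unfold phiFun tokenMove
  split_ifs <;> simp [symmDiff_def]

lemma phiFun_involutive : Function.Involutive (phiFun G S α) := by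
  intro A
  by_cases h : compDist G S A ∈ α
  · rw [phiFun_eq_symmDiff A, if_pos h, phiFun_eq_symmDiff, compDist_symmDiff_of_subset G S
      subset_rfl, if_pos h, symmDiff_symmDiff_cancel_right]
  · simp [phiFun, h]

lemma card_phiFun [Fintype V] {k : ℕ} (hS : #S = 2) (hk : 1 ≤ k) (hα : α ⊆ TS G S k)
    {A : Finset V} (hA : #A = k) : #(phiFun G S α A) = k := by
  rw [phiFun]
  split_ifs with h
  · have hsplit := card_inter_add_finsum_compDist G S A
    rw [(hα h).2] at hsplit
    have hA' := card_sdiff_add_card_inter A S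
    have hS' := card_sdiff_add_card_inter S A
    rw [inter_comm, hS] at hS'
    rw [tokenMove, card_union_of_disjoint disjoint_sdiff_sdiff]
    omega
  · exact hA

lemma exists_adj_phiFun_symmDiff (hS : SameNbrCut G S) {A B : Finset V} (hcard : #A = #B)
    {a b : V} (hab : G.Adj a b) (h : A ∆ B = {a, b}) :
    ∃ x y, G.Adj x y ∧ phiFun G S α A ∆ phiFun G S α B = {x, y} := by
  rw [phiFun_eq_symmDiff, phiFun_eq_symmDiff, symmDiff_symmDiff_symmDiff_comm]
  by_cases hiff : compDist G S A ∈ α ↔ compDist G S B ∈ α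
  · rw [if_congr hiff rfl rfl, symmDiff_self, symmDiff_bot, h]
    exact ⟨a, b, hab, rfl⟩
  · have hne : compDist G S A ≠ compDist G S B := fun he => hiff (he ▸ Iff.rfl)
    have hmoved : (if compDist G S A ∈ α then S else ∅) ∆
        (if compDist G S B ∈ α then S else ∅) = S := by
      split_ifs <;> simp_all
    rw [hmoved]
    exact exists_adj_symmDiff_symmDiff_of_compDist_ne hS hcard hne hab h

end

theorem phi_is_automorphism_general [Fintype V] [DecidableEq V] (G : SimpleGraph V)
    (S : Finset V) (hS : SameNbrCut G S) (k : ℕ)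
    (hk1 : 1 ≤ k)
    (α : Set (delComp G S → ℕ)) (hα : α ⊆ TS G S k) :
    ∃ e : tokenGraph G k ≃g tokenGraph G k,
      ∀ A : {A : Finset V // A.card = k},
        ((e A : {B : Finset V // B.card = k}) : Finset V) = phiFun G S α (↑A : Finset V) := by
  let f : {A : Finset V // #A = k} → {A : Finset V // #A = k} :=
    fun A => ⟨phiFun G S α A, card_phiFun hS.1 hk1 hα A.2⟩
  have hf : Function.Involutive f := fun A => Subtype.ext (phiFun_involutive (α := α) A.1)
  have hadj : ∀ {A B}, (tokenGraph G k).Adj A B → (tokenGraph G k).Adj (f A) (f B) := by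
    rintro A B ⟨a, b, hab, h⟩
    exact exists_adj_phiFun_symmDiff hS (A.2.trans B.2.symm) hab h
  refine ⟨⟨hf.toPerm, fun {A B} => ⟨fun h => ?_, hadj⟩⟩, fun _ => rfl⟩
  rw [← hf A, ← hf B]
  exact hadj h

/-- Proposition 1, first part: `φ_{S,α}` is an automorphism of `F_k(G)`. -/
theorem phi_is_automorphism [Fintype V] [DecidableEq V] (G : SimpleGraph V)
    (hG : G.Connected) (S : Finset V) (hS : SameNbrCut G S) (k : ℕ)
    (hk1 : 1 ≤ k) (hk2 : k ≤ Fintype.card V - 1)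
    (α : Set (delComp G S → ℕ)) (hα : α ⊆ TS G S k) :
    ∃ e : tokenGraph G k ≃g tokenGraph G k,
      ∀ A : {A : Finset V // A.card = k},
        ((e A : {B : Finset V // B.card = k}) : Finset V) = phiFun G S α (↑A : Finset V) :=
  phi_is_automorphism_general G S hS k hk1 α hα
end

section
/- With notation as above, for any α, β ⊆ T_S one has φ_{S,α} ∘ φ_{S,β} = φ_{S, α △ β}, where △ denotes symmetric difference. -/
open scoped Classical symmDiff

variable {V : Type*}

/-!
`φ_{S,α}` only exchanges tokens inside `S`, so it preserves the distribution tuple over the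
components of `G \ S`. Both sides therefore apply `A ↦ A^S` according to whether the same tuple
lies in `α`, `β`, resp. `α ∆ β`, and `A ↦ A^S` is an involution.
-/

lemma tokenMove_tokenMove [DecidableEq V] (A S : Finset V) :
    tokenMove (tokenMove A S) S = A := by
  ext v
  by_cases hv : v ∈ S <;> simp [tokenMove, hv]

lemma compDist_tokenMove [DecidableEq V] (G : SimpleGraph V) (S A : Finset V) :
    compDist G S (tokenMove A S) = compDist G S A := by
  funext c
  unfold compDist tokenMove
  congr 1
  ext v
  have hv : (v : V) ∉ S := v.2
  simp [hv]

lemma compDist_phiFun [DecidableEq V] (G : SimpleGraph V) (S : Finset V)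
    (α : Set (delComp G S → ℕ)) (A : Finset V) :
    compDist G S (phiFun G S α A) = compDist G S A := by
  unfold phiFun
  split_ifs
  · exact compDist_tokenMove G S A
  · rfl

theorem phi_comp_symmDiff_general [DecidableEq V] (G : SimpleGraph V)
    (S : Finset V) (k : ℕ)
    (α β : Set (delComp G S → ℕ)) :
    ∀ A : Finset V, A.card = k →
      phiFun G S α (phiFun G S β A) = phiFun G S (α ∆ β) A := by
  intro A _
  rw [phiFun, compDist_phiFun]
  unfold phiFun
  by_cases ha : compDist G S A ∈ α <;> by_cases hb : compDist G S A ∈ β <;>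
    simp [ha, hb, Set.mem_symmDiff, tokenMove_tokenMove]

/-- `φ_{S,α} ∘ φ_{S,β} = φ_{S, α △ β}`. -/
theorem phi_comp_symmDiff [Fintype V] [DecidableEq V] (G : SimpleGraph V)
    (hG : G.Connected) (S : Finset V) (hS : SameNbrCut G S) (k : ℕ)
    (hk1 : 1 ≤ k) (hk2 : k ≤ Fintype.card V - 1)
    (α β : Set (delComp G S → ℕ)) (hα : α ⊆ TS G S k) (hβ : β ⊆ TS G S k) :
    ∀ A : Finset V, A.card = k →
      phiFun G S α (phiFun G S β A) = phiFun G S (α ∆ β) A :=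
  phi_comp_symmDiff_general G S k α β
end

section
/- Let G be a connected graph with a 2-cut with the same neighbours S, and let α ⊆ T_S with α ≠ ∅ and α ≠ T_S. Then φ_{S,α} is not of the form ι(f) for any automorphism f of G. -/
open scoped Classical symmDiff

variable {V : Type*}

/-!
Write `S = {x, y}` and take `t ∈ α`, `t' ∈ T_S \ α`, realised by `(k-1)`-sets `C`, `C'` avoiding
`S`. If `φ_{S,α} = ι(f)`, then `f` swaps `C ∪ {x}` and `C ∪ {y}`, which forces `f x = y`, while `f`
fixes `C' ∪ {x}`, which forces `f x ∈ C' ∪ {x}`; but `y` lies outside `C' ∪ {x}`.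
-/

open Finset

theorem Finset.exists_subset_card_filter_eq {α ι : Type*} [Fintype ι] [DecidableEq ι]
    [DecidableEq α] (s : Finset α) (p : α → ι) (t : ι → ℕ)
    (ht : ∀ i, t i ≤ #{a ∈ s | p a = i}) :
    ∃ D ⊆ s, ∀ i, #{a ∈ D | p a = i} = t i := by
  choose D hDs hDt using fun i => exists_subset_card_eq (ht i)
  refine ⟨univ.biUnion D, fun a ha => ?_, fun i => ?_⟩
  · obtain ⟨i, -, hi⟩ := mem_biUnion.1 ha
    exact (mem_filter.1 (hDs i hi)).1
  · suffices h : {a ∈ univ.biUnion D | p a = i} = D i by rw [h, hDt]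
    ext a
    simp only [mem_filter, mem_biUnion, mem_univ, true_and]
    constructor
    · rintro ⟨⟨j, hj⟩, rfl⟩
      rwa [(mem_filter.1 (hDs j hj)).2]
    · intro ha
      exact ⟨⟨i, ha⟩, (mem_filter.1 (hDs i ha)).2⟩

lemma Finset.apply_eq_of_image_insert_swap {α : Type*} [DecidableEq α] {f : α → α}
    (hf : Function.Injective f) {x y : α} {C : Finset α} (hxy : x ≠ y)
    (hxC : x ∉ C) (hx : (insert x C).image f = insert y C)
    (hy : (insert y C).image f = insert x C) : f x = y := by
  rcases mem_insert.1 (hx ▸ mem_image_of_mem f (mem_insert_self x C)) with h | hfxC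
  · exact h
  obtain ⟨z, hz, hzx⟩ := mem_image.1 (hy ▸ mem_insert_of_mem hfxC)
  rcases mem_insert.1 (hf hzx ▸ hz) with h | h
  · exact absurd h hxy
  · exact absurd h hxC

section TokenMoves

variable {G : SimpleGraph V} {S : Finset V}

lemma compDist_map_subtype (D : Finset ((↑S : Set V)ᶜ : Set V)) :
    compDist G S (D.map (Function.Embedding.subtype _)) =
      fun c => #{v ∈ D | (G.induce ((↑S : Set V)ᶜ)).connectedComponentMk v = c} := by
  funext c
  rw [compDist, ← Set.ncard_coe_finset]
  congr 1
  ext v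
  simp only [Set.mem_ofPred_eq, coe_filter]
  exact and_congr_left fun _ => mem_map' (Function.Embedding.subtype _)

lemma exists_compDist_eq_of_mem_TS [Fintype V] {k : ℕ} {t : delComp G S → ℕ}
    (ht : t ∈ TS G S k) :
    ∃ C : Finset V, Disjoint S C ∧ C.card = k - 1 ∧ compDist G S C = t := by
  obtain ⟨hle, hsum⟩ := ht
  obtain ⟨D, -, hD⟩ := exists_subset_card_filter_eq univ
    (G.induce ((↑S : Set V)ᶜ)).connectedComponentMk t fun c => by
      simpa [Set.ncard_eq_toFinset_card', SimpleGraph.ConnectedComponent.supp] using hle c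
  refine ⟨D.map (Function.Embedding.subtype _), ?_, ?_, by
    rw [compDist_map_subtype]; exact funext hD⟩
  · rw [disjoint_right]
    rintro _ hv
    obtain ⟨v, -, rfl⟩ := mem_map.1 hv
    exact v.2
  · rw [card_map, card_eq_sum_card_fiberwise (t := (univ : Finset (delComp G S)))
      fun _ _ => mem_univ _, ← hsum, finsum_eq_sum_of_fintype]
    exact sum_congr rfl fun c _ => hD c

lemma compDist_insert_of_mem [DecidableEq V] {x : V} (hx : x ∈ S) (A : Finset V) :
    compDist G S (insert x A) = compDist G S A := by
  funext c
  unfold compDist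
  congr 1
  ext v
  have hvx : (v : V) ≠ x := fun h => v.2 (h ▸ hx)
  simp [hvx]

lemma tokenMove_insert_of_eq_pair [DecidableEq V] {x y : V} {C : Finset V} (hS : S = {x, y})
    (hxy : x ≠ y) (hC : Disjoint S C) : tokenMove (insert x C) S = insert y C := by
  subst hS
  have hx : x ∉ C := disjoint_left.1 hC (by simp)
  have hy : y ∉ C := disjoint_left.1 hC (by simp)
  ext v
  simp only [tokenMove, mem_union, mem_sdiff, mem_insert, mem_singleton]
  grind

lemma phiFun_insert_of_eq_pair [DecidableEq V] {x y : V} {C : Finset V}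
    (α : Set (delComp G S → ℕ)) (hS : S = {x, y}) (hxy : x ≠ y) (hC : Disjoint S C) :
    phiFun G S α (insert x C) = if compDist G S C ∈ α then insert y C else insert x C := by
  rw [phiFun, compDist_insert_of_mem (by simp [hS]), tokenMove_insert_of_eq_pair hS hxy hC]

end TokenMoves

theorem phi_not_iota_general [Fintype V] [DecidableEq V] (G : SimpleGraph V)
    (S : Finset V) (hS : SameNbrCut G S) (k : ℕ)
    (hk1 : 1 ≤ k)
    (α : Set (delComp G S → ℕ)) (hα : α ⊆ TS G S k)
    (hne : α ≠ ∅) (hnT : α ≠ TS G S k) :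
    ¬ ∃ f : G ≃g G, ∀ A : Finset V, A.card = k →
        phiFun G S α A = Finset.image f A := by
  rintro ⟨f, hf⟩
  obtain ⟨x, y, hxy, hSxy⟩ := card_eq_two.1 hS.1
  have hyx : S = {y, x} := hSxy.trans (pair_comm x y)
  obtain ⟨t, htα⟩ := Set.nonempty_iff_ne_empty.2 hne
  obtain ⟨t', ht', ht'α⟩ := Set.exists_of_ssubset (hα.ssubset_of_ne hnT)
  obtain ⟨C, hSC, hC, rfl⟩ := exists_compDist_eq_of_mem_TS (hα htα)
  obtain ⟨C', hSC', hC', rfl⟩ := exists_compDist_eq_of_mem_TS ht'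
  have hcard {D : Finset V} {z : V} (hz : z ∈ S) (hSD : Disjoint S D) (hD : #D = k - 1) :
      #(insert z D) = k := by
    rw [card_insert_of_notMem (disjoint_left.1 hSD hz)]
    omega
  have hxS : x ∈ S := by simp [hSxy]
  have hyS : y ∈ S := by simp [hSxy]
  have hfx : f x = y := apply_eq_of_image_insert_swap f.injective hxy
    (disjoint_left.1 hSC hxS)
    (by rw [← hf _ (hcard hxS hSC hC), phiFun_insert_of_eq_pair α hSxy hxy hSC, if_pos htα])
    (by rw [← hf _ (hcard hyS hSC hC), phiFun_insert_of_eq_pair α hyx hxy.symm hSC, if_pos htα])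
  have hfixed : (insert x C').image f = insert x C' := by
    rw [← hf _ (hcard hxS hSC' hC'), phiFun_insert_of_eq_pair α hSxy hxy hSC', if_neg ht'α]
  have hy : y ∈ insert x C' := hfx ▸ hfixed ▸ mem_image_of_mem f (mem_insert_self x C')
  rcases mem_insert.1 hy with h | h
  · exact hxy h.symm
  · exact disjoint_left.1 hSC' hyS h

/-- Proposition 1, second part: for `∅ ≠ α ≠ T_S`, `φ_{S,α}` is not
induced, i.e. it is not `ι(f)` for any automorphism `f` of `G`. -/
theorem phi_not_iota [Fintype V] [DecidableEq V] (G : SimpleGraph V)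
    (hG : G.Connected) (S : Finset V) (hS : SameNbrCut G S) (k : ℕ)
    (hk1 : 1 ≤ k) (hk2 : k ≤ Fintype.card V - 1)
    (α : Set (delComp G S → ℕ)) (hα : α ⊆ TS G S k)
    (hne : α ≠ ∅) (hnT : α ≠ TS G S k) :
    ¬ ∃ f : G ≃g G, ∀ A : Finset V, A.card = k →
        phiFun G S α A = Finset.image f A :=
  phi_not_iota_general G S hS k hk1 α hα hne hnT
end

section
/- Let G be a connected graph, S a 2-cut with the same neighbours. Then φ_{S,T_S} equals ι(τ), where τ is the automorphism of G swapping the two vertices of S and fixing all other vertices. In particular φ_{S,T_S} is an induced automorphism of F_k(G). -/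
open scoped Classical symmDiff

variable {V : Type*}

/-! Since `x` and `y` have the same neighbours outside `S = {x, y}`, the transposition `τ = (x y)`
is an automorphism of `G`. The distribution tuple of a `k`-set `A` automatically satisfies the
bounds `kᵢ ≤ nᵢ` and sums to `|A \ S|`, so it lies in `T_S` exactly when `A` has one token in `S`;
then `A ↦ A^S` moves that token to the other vertex of `S`, which is `τ(A)`. Every other `k`-set
meets `S` in `∅` or in `S` and is fixed both by `φ_{S,T_S}` and by `τ`. -/

theorem Finset.mem_image_swap [DecidableEq V] {A : Finset V} {x y v : V} :
    v ∈ A.image (Equiv.swap x y) ↔ Equiv.swap x y v ∈ A := by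
  simp [Finset.mem_image, Equiv.swap_apply_eq_iff]

theorem Finset.image_swap_eq_self [DecidableEq V] {A : Finset V} {x y : V}
    (h : x ∈ A ↔ y ∈ A) : A.image (Equiv.swap x y) = A := by
  ext v
  rw [Finset.mem_image_swap, Equiv.swap_apply_def]
  split_ifs with hvx hvy <;> simp_all

theorem tokenMove_pair_eq_image_swap [DecidableEq V] {A : Finset V} {x y : V}
    (h : x ∈ A ↔ y ∉ A) : tokenMove A {x, y} = A.image (Equiv.swap x y) := by
  ext v
  rw [Finset.mem_image_swap, Equiv.swap_apply_def]
  simp only [tokenMove, Finset.mem_union, Finset.mem_sdiff, Finset.mem_insert,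
    Finset.mem_singleton]
  split_ifs with hvx hvy <;> subst_vars <;> tauto

theorem Finset.card_inter_pair_eq_one_iff [DecidableEq V] {A : Finset V} {x y : V}
    (hxy : x ≠ y) : (A ∩ {x, y}).card = 1 ↔ (x ∈ A ↔ y ∉ A) := by
  by_cases hx : x ∈ A <;> by_cases hy : y ∈ A <;>
    simp [Finset.inter_insert_of_mem, Finset.inter_insert_of_notMem, hx, hy, hxy]

namespace SimpleGraph

theorem adj_swap_iff_of_adj_iff [DecidableEq V] {G : SimpleGraph V} {x y : V}
    (h : ∀ v, v ≠ x → v ≠ y → (G.Adj x v ↔ G.Adj y v)) (a b : V) :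
    G.Adj (Equiv.swap x y a) (Equiv.swap x y b) ↔ G.Adj a b := by
  have adj_out : ∀ a v, v ≠ x → v ≠ y → G.Adj a v → G.Adj (Equiv.swap x y a) v := by
    intro a v hvx hvy hav
    rcases eq_or_ne a x with rfl | hax
    · simpa using (h v hvx hvy).1 hav
    rcases eq_or_ne a y with rfl | hay
    · simpa using (h v hvx hvy).2 hav
    · rwa [Equiv.swap_apply_of_ne_of_ne hax hay]
  have adj_swap : ∀ a b, G.Adj a b → G.Adj (Equiv.swap x y a) (Equiv.swap x y b) := by
    intro a b hab
    by_cases hb : b = x ∨ b = y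
    · by_cases ha : a = x ∨ a = y
      · rcases ha with rfl | rfl <;> rcases hb with rfl | rfl <;> simp_all [adj_comm]
      · simp only [not_or] at ha
        rw [Equiv.swap_apply_of_ne_of_ne ha.1 ha.2]
        exact (adj_out b a ha.1 ha.2 hab.symm).symm
    · simp only [not_or] at hb
      rw [Equiv.swap_apply_of_ne_of_ne hb.1 hb.2]
      exact adj_out a b hb.1 hb.2 hab
  refine ⟨fun hab => ?_, adj_swap a b⟩
  simpa using adj_swap _ _ hab

end SimpleGraph

theorem compDist_le_ncard_supp [Finite V] (G : SimpleGraph V) (S A : Finset V)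
    (c : delComp G S) : compDist G S A c ≤ c.supp.ncard :=
  Set.ncard_le_ncard (fun _ hv => hv.2) (Set.toFinite _)

open scoped Function in
theorem finsum_compDist [Finite V] [DecidableEq V] (G : SimpleGraph V) (S A : Finset V) :
    ∑ᶠ c, compDist G S A c = (A \ S).card := by
  set H := G.induce ((↑S : Set V)ᶜ)
  have hdisj : Pairwise (Disjoint on fun c : delComp G S =>
      {v : ((↑S : Set V)ᶜ : Set V) | (v : V) ∈ A ∧ H.connectedComponentMk v = c}) := by
    intro c d hcd
    exact Set.disjoint_left.2 fun v hc hd => hcd (hc.2.symm.trans hd.2)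
  have hunion : (⋃ c : delComp G S,
      {v : ((↑S : Set V)ᶜ : Set V) | (v : V) ∈ A ∧ H.connectedComponentMk v = c}) =
      Subtype.val ⁻¹' (A : Set V) := by
    ext v; simp
  have himage : Subtype.val '' (Subtype.val ⁻¹' (A : Set V) : Set ((↑S : Set V)ᶜ : Set V)) =
      ↑(A \ S) := by
    ext v; simp [and_comm]
  simp only [compDist]
  rw [← Set.ncard_iUnion_of_finite (fun _ => Set.toFinite _) hdisj, hunion,
    ← Set.ncard_image_of_injective _ Subtype.val_injective, himage, Set.ncard_coe_finset]

theorem compDist_mem_TS_iff [Finite V] [DecidableEq V] {G : SimpleGraph V} {S A : Finset V}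
    {k : ℕ} (hk : 1 ≤ k) (hA : A.card = k) :
    compDist G S A ∈ TS G S k ↔ (A ∩ S).card = 1 := by
  have hsplit := Finset.card_sdiff_add_card_inter A S
  simp only [TS, Set.mem_ofPred_eq, compDist_le_ncard_supp, implies_true, true_and,
    finsum_compDist]
  omega

theorem phi_full_is_induced_general [Fintype V] [DecidableEq V] (G : SimpleGraph V)
    (x y : V) (hS : SameNbrCut G {x, y}) (k : ℕ)
    (hk1 : 1 ≤ k) :
    (∀ a b : V, G.Adj (Equiv.swap x y a) (Equiv.swap x y b) ↔ G.Adj a b) ∧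
      ∀ A : Finset V, A.card = k →
        phiFun G {x, y} (TS G {x, y} k) A = Finset.image (Equiv.swap x y) A := by
  obtain ⟨hcard, -, hnbr⟩ := hS
  have hxy : x ≠ y := by
    rintro rfl
    simp at hcard
  refine ⟨G.adj_swap_iff_of_adj_iff fun v hvx hvy =>
    hnbr x (by simp) y (by simp) v (by simp [hvx, hvy]), fun A hA => ?_⟩
  rw [phiFun, compDist_mem_TS_iff hk1 hA, Finset.card_inter_pair_eq_one_iff hxy]
  split_ifs with hone
  · exact tokenMove_pair_eq_image_swap hone
  · exact (Finset.image_swap_eq_self (by tauto)).symm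

/-- `φ_{S,T_S} = ι(τ)` where `τ` is the transposition of the two
vertices of `S` (which is an automorphism of `G`). -/
theorem phi_full_is_induced [Fintype V] [DecidableEq V] (G : SimpleGraph V)
    (hG : G.Connected) (x y : V) (hS : SameNbrCut G {x, y}) (k : ℕ)
    (hk1 : 1 ≤ k) (hk2 : k ≤ Fintype.card V - 1) :
    (∀ a b : V, G.Adj (Equiv.swap x y a) (Equiv.swap x y b) ↔ G.Adj a b) ∧
      ∀ A : Finset V, A.card = k →
        phiFun G {x, y} (TS G {x, y} k) A = Finset.image (Equiv.swap x y) A :=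
  phi_full_is_induced_general G x y hS k hk1
end
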